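/- Let Γ be a group of isometries of a proper metric space X acting discretely and freely. Then the induced action of Γ on Loc-Geod(X), given by (gγ)(t) = g(γ(t)), is properly discontinuous: every γ ∈ Loc-Geod(X) has an open neighborhood U such that {g ∈ Γ : gU ∩ U ≠ ∅} = {id}. -/

import Mathlib

/-!
A free discrete action of a group of isometries is properly discontinuous on `X` itself: the
displacements `d(x, g x)` of the finitely many `g ≠ 1` with `d(x, g x) ≤ 1` are positive, so a
small ball around `x` is moved off itself by every `g ≠ 1`. Evaluation at time `0` is a
continuous equivariant map `Loc-Geod(X) → X`, and the preimage of that ball is the required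
neighbourhood of `γ`.
-/

open Filter Metric Set MeasureTheory Topology
open scoped ENNReal NNReal

noncomputable section

namespace Paper

variable {X : Type*} [MetricSpace X]

/-- The Gromov product `(y,z)_x`. -/
def gromov (x y z : X) : ℝ := (dist x y + dist x z - dist y z) / 2

/-- `δ`-hyperbolicity via the four points condition on Gromov products. -/
def IsHyperbolic (X : Type*) [MetricSpace X] (δ : ℝ) : Prop :=
  ∀ w x y z : X, min (gromov w x y) (gromov w y z) - δ ≤ gromov w x z

/-- `X` is `P₀`-packed at scale `r₀`: every closed ball of radius `3r₀` contains at most `P₀`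
points that are pairwise `2r₀`-separated. -/
def IsPacked (X : Type*) [MetricSpace X] (P₀ : ℕ) (r₀ : ℝ) : Prop :=
  ∀ (x : X) (s : Finset X), (↑s : Set X) ⊆ Metric.closedBall x (3 * r₀) →
    (∀ y ∈ s, ∀ z ∈ s, y ≠ z → 2 * r₀ < dist y z) → s.card ≤ P₀

/-- A `σ`-geodesic line: an isometric line all whose subsegments are `σ`-geodesics. -/
structure IsSigmaGeodLine (σ : X → X → ℝ → X) (γ : ℝ → X) : Prop where
  isom : Isometry γ
  seg : ∀ s t : ℝ, s ≤ t → ∀ l ∈ Set.Icc (0:ℝ) 1, σ (γ s) (γ t) l = γ (s + l * (t - s))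

/-- `(X,σ)` is a GCB-space: `σ` is a convex, consistent, reversible, geodesically complete
geodesic bicombing on the (complete) metric space `X`. -/
structure IsGCB (σ : X → X → ℝ → X) : Prop where
  source : ∀ x y : X, σ x y 0 = x
  target : ∀ x y : X, σ x y 1 = y
  propor : ∀ x y : X, ∀ s ∈ Set.Icc (0:ℝ) 1, ∀ t ∈ Set.Icc (0:ℝ) 1,
    dist (σ x y s) (σ x y t) = |s - t| * dist x y
  convex : ∀ x y x' y' : X, ConvexOn ℝ (Set.Icc (0:ℝ) 1) fun t => dist (σ x y t) (σ x' y' t)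
  consistent : ∀ x y : X, ∀ s t : ℝ, 0 ≤ s → s ≤ t → t ≤ 1 → ∀ l ∈ Set.Icc (0:ℝ) 1,
    σ (σ x y s) (σ x y t) l = σ x y ((1 - l) * s + l * t)
  reversible : ∀ x y : X, ∀ t ∈ Set.Icc (0:ℝ) 1, σ x y t = σ y x (1 - t)
  geodComplete : ∀ x y : X, ∃ γ : ℝ → X, IsSigmaGeodLine σ γ ∧ ∃ a b : ℝ, a ≤ b ∧
    b - a = dist x y ∧ ∀ l ∈ Set.Icc (0:ℝ) 1, γ (a + l * (b - a)) = σ x y l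

section Group

variable (G : Type*) [Group G] [MulAction G X]

/-- A group of isometries is discrete if orbits meet balls in finitely many elements. -/
def DiscreteAction (X : Type*) [MetricSpace X] [MulAction G X] : Prop :=
  ∀ (x : X) (R : ℝ), {g : G | dist x (g • x) ≤ R}.Finite

/-- The action is free. -/
def FreeAction (X : Type*) [MetricSpace X] [MulAction G X] : Prop :=
  ∀ (g : G) (x : X), g • x = x → g = 1

/-- `Γ` acts by `σ`-isometries. -/
def SigmaEquivariant (σ : X → X → ℝ → X) : Prop :=
  ∀ (g : G) (x y : X), ∀ t ∈ Set.Icc (0:ℝ) 1, g • σ x y t = σ (g • x) (g • y) t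

/-- The number of orbit points in the open ball `B(x,T)`. -/
def orbitCount (x : X) (T : ℝ) : ℕ :=
  Nat.card {y : X // y ∈ MulAction.orbit G x ∧ dist x y < T}

/-- The critical exponent `h_Γ = limsup (1/T) log #(Γx ∩ B(x,T))`. -/
def critExp (x : X) : EReal :=
  limsup (fun T : ℝ => ((Real.log (orbitCount G x T) / T : ℝ) : EReal)) atTop

end Group

/-- The quotient space `Γ\X`. -/
def QuotX (G : Type*) (X : Type*) [Group G] [MulAction G X] [MetricSpace X] :=
  Quotient (MulAction.orbitRel G X)

section Quot

variable (G : Type*) [Group G] [MulAction G X] [IsIsometricSMul G X]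

private lemma bddb (x y : X) : BddBelow (Set.range fun g : G => dist x (g • y)) :=
  ⟨0, by rintro _ ⟨g, rfl⟩; exact dist_nonneg⟩

/-- The quotient distance `d(πx,πy) = inf_g d(x, g·y)`. -/
def qdist (a b : QuotX G X) : ℝ :=
  ⨅ g : G, dist (Quotient.out a) (g • Quotient.out b)

private lemma qdist_self (a : QuotX G X) : qdist G a a = 0 := by
  refine le_antisymm ?_ (le_ciInf fun g => dist_nonneg)
  have h := ciInf_le (bddb G (Quotient.out a) (Quotient.out a)) (1 : G)
  simpa [qdist] using h

private lemma qdist_comm_le (a b : QuotX G X) : qdist G a b ≤ qdist G b a := by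
  refine le_ciInf fun g => ?_
  have h := ciInf_le (bddb G (Quotient.out a) (Quotient.out b)) g⁻¹
  refine h.trans_eq ?_
  rw [← dist_smul g (Quotient.out a) (g⁻¹ • Quotient.out b), smul_inv_smul, dist_comm]

private lemma qdist_triangle (a b c : QuotX G X) :
    qdist G a c ≤ qdist G a b + qdist G b c := by
  refine le_of_forall_pos_le_add fun ε hε => ?_
  have h1 : qdist G a b < qdist G a b + ε / 2 := lt_add_of_pos_right _ (half_pos hε)
  have h2 : qdist G b c < qdist G b c + ε / 2 := lt_add_of_pos_right _ (half_pos hε)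
  obtain ⟨g, hg⟩ := exists_lt_of_ciInf_lt h1
  obtain ⟨h, hh⟩ := exists_lt_of_ciInf_lt h2
  have key : qdist G a c ≤ dist (Quotient.out a) ((g * h) • Quotient.out c) :=
    ciInf_le (bddb G _ _) (g * h)
  have e : dist (g • Quotient.out b) ((g * h) • Quotient.out c)
      = dist (Quotient.out b) (h • Quotient.out c) := by
    rw [mul_smul, dist_smul]
  have tri := dist_triangle (Quotient.out a) (g • Quotient.out b) ((g * h) • Quotient.out c)
  rw [e] at tri
  have := key.trans tri
  linarith

/-- The quotient pseudometric on `Γ\X` (a genuine metric whenever the action is discrete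
and free). -/
instance : PseudoMetricSpace (QuotX G X) where
  dist := qdist G
  dist_self := qdist_self G
  dist_comm a b := le_antisymm (qdist_comm_le G a b) (qdist_comm_le G b a)
  dist_triangle := qdist_triangle G

/-- The projection `π : X → Γ\X`. -/
def projQ (x : X) : QuotX G X := Quotient.mk (MulAction.orbitRel G X) x

lemma projQ_dist_le (x y : X) : dist (projQ G x) (projQ G y) ≤ dist x y := by
  obtain ⟨k, hk⟩ := MulAction.mem_orbit_iff.mp
    ((MulAction.orbitRel_apply (G := G)).mp (Quotient.mk_out (s := MulAction.orbitRel G X) x))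
  obtain ⟨l, hl⟩ := MulAction.mem_orbit_iff.mp
    ((MulAction.orbitRel_apply (G := G)).mp (Quotient.mk_out (s := MulAction.orbitRel G X) y))
  have h1 : dist (projQ G x) (projQ G y)
      ≤ dist (Quotient.out (projQ G x)) ((k * l⁻¹) • Quotient.out (projQ G y)) :=
    ciInf_le (bddb G _ _) (k * l⁻¹)
  have hk2 : Quotient.out (projQ G x) = k • x := hk.symm
  have hl2 : Quotient.out (projQ G y) = l • y := hl.symm
  rw [hk2, hl2, smul_smul, inv_mul_cancel_right, dist_smul] at h1
  exact h1

/-- `π` as a continuous (1-Lipschitz) map. -/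
def projCM : C(X, QuotX G X) :=
  ⟨projQ G, (LipschitzWith.of_dist_le_mul (K := 1) fun a b => by
    simpa using projQ_dist_le G a b).continuous⟩

end Quot

end Paper

namespace Paper

variable {X : Type*} [MetricSpace X]

/-- The space of local geodesic lines of a (pseudo)metric space `Y`, as a subset of the space
of continuous maps `ℝ → Y` (with the topology of uniform convergence on compact sets). -/
def LocGeodSet (Y : Type*) [PseudoMetricSpace Y] : Set C(ℝ, Y) :=
  {γ | ∀ t : ℝ, ∃ ε > 0, ∀ s ∈ Set.Icc (t - ε) (t + ε), ∀ u ∈ Set.Icc (t - ε) (t + ε),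
    dist (γ s) (γ u) = |s - u|}

/-- The set of (parametrized) `σ`-geodesic lines of `X`. -/
def SigmaGeodLines (σ : X → X → ℝ → X) : Set C(ℝ, X) := {γ | IsSigmaGeodLine σ ⇑γ}

section Proj

variable (G : Type*) [Group G] [MulAction G X] [IsIsometricSMul G X]

/-- Post-composition with the projection `π : X → Γ\X`. -/
def projComp (γ : C(ℝ, X)) : C(ℝ, QuotX G X) := (projCM G).comp γ

/-- The space `Loc-Geod_σ(Γ\X)`: the image of the `σ`-geodesic lines of `X` under `Π`. -/
def LocGeodQuotSet (σ : X → X → ℝ → X) : Set C(ℝ, QuotX G X) :=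
  projComp G '' SigmaGeodLines σ

end Proj

/-- Translation of `ℝ` by `c`, as a continuous map. -/
def trCM (c : ℝ) : C(ℝ, ℝ) := ⟨fun t => t + c, continuous_add_right c⟩

/-- The reparametrization flow `Φ_c γ = γ(· + c)`. -/
def shiftCM {Y : Type*} [TopologicalSpace Y] (c : ℝ) (γ : C(ℝ, Y)) : C(ℝ, Y) := γ.comp (trCM c)

lemma shift_sigma {σ : X → X → ℝ → X} (c : ℝ) {γ : ℝ → X} (h : IsSigmaGeodLine σ γ) :
    IsSigmaGeodLine σ fun t => γ (t + c) := by
  constructor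
  · exact h.isom.comp (Isometry.of_dist_eq fun a b => dist_add_right a b c)
  · intro s t hst l hl
    have h2 := h.seg (s + c) (t + c) (by linarith) l hl
    calc σ (γ (s + c)) (γ (t + c)) l = γ (s + c + l * (t + c - (s + c))) := h2
    _ = γ (s + l * (t - s) + c) := by ring_nf

section Flow

variable (G : Type*) [Group G] [MulAction G X] [IsIsometricSMul G X]

lemma shift_mem {σ : X → X → ℝ → X} (c : ℝ) {γ : C(ℝ, QuotX G X)}
    (h : γ ∈ LocGeodQuotSet G σ) : shiftCM c γ ∈ LocGeodQuotSet G σ := by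
  obtain ⟨γ', hγ', rfl⟩ := h
  exact ⟨shiftCM c γ', shift_sigma c hγ', ContinuousMap.ext fun t => rfl⟩

/-- The time-one map `Φ₁` of the reparametrization flow on `Loc-Geod_σ(Γ\X)`. -/
def flowOne (σ : X → X → ℝ → X) : ↥(LocGeodQuotSet G σ) → ↥(LocGeodQuotSet G σ) :=
  fun γ => ⟨shiftCM 1 γ.1, shift_mem G 1 γ.2⟩

end Flow

/-- The class `F` of admissible weight functions. -/
structure AdmissibleF (f : ℝ → ℝ) : Prop where
  cont : Continuous f
  pos : ∀ s, 0 < f s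
  symm : ∀ s : ℝ, f (-s) = f s
  integrable : MeasureTheory.Integrable f
  mass : ∫ s, f s = 1
  momentIntegrable : MeasureTheory.Integrable fun s : ℝ => 2 * |s| * f s

/-- The constant `C(f) = ∫ 2|s| f(s) ds`. -/
def Cf (f : ℝ → ℝ) : ℝ := ∫ s : ℝ, 2 * |s| * f s

/-- The distance `f(γ,γ') = ∫ d(γ(s),γ'(s)) f(s) ds` on spaces of (local) geodesics. -/
def fDist (f : ℝ → ℝ) {Y : Type*} [PseudoMetricSpace Y] (γ γ' : C(ℝ, Y)) : ℝ :=
  ∫ s : ℝ, dist (γ s) (γ' s) * f s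

section Dynamics

variable {Y : Type*}

/-- The dynamical distance `d^n(y,y') = max_{0 ≤ i ≤ n-1} d(T^i y, T^i y')`. -/
def dynDist (d : Y → Y → ℝ) (T : Y → Y) (n : ℕ) (a b : Y) : ℝ :=
  ⨆ i : Fin n, d (T^[(i : ℕ)] a) (T^[(i : ℕ)] b)

/-- The dynamical ball `B_{d^n}(a,r)`. -/
def dynBall (d : Y → Y → ℝ) (T : Y → Y) (n : ℕ) (a : Y) (r : ℝ) : Set Y :=
  {b | dynDist d T n a b < r}

/-- The covering number of `K` at scale `r` with respect to a distance function `d`. -/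
def covNum (d : Y → Y → ℝ) (K : Set Y) (r : ℝ) : ℕ :=
  sInf {m : ℕ | ∃ c : Fin m → Y, K ⊆ ⋃ i, {b | d (c i) b < r}}

/-- The Bowen entropy of `K` w.r.t. `d`: `lim_{r→0} limsup_n (1/n) log Cov_{d^n}(K,r)`. -/
def covEntropy (d : Y → Y → ℝ) (T : Y → Y) (K : Set Y) : EReal :=
  ⨆ r : {r : ℝ // 0 < r},
    limsup (fun n : ℕ => ((Real.log (covNum (dynDist d T n) K r.1) / n : ℝ) : EReal)) atTop

/-- The entropy of (the join of the first `n` iterates of) a finite measurable partition. -/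
def partitionEnt [MeasurableSpace Y] (μ : Measure Y) (T : Y → Y) {k : ℕ}
    (P : Fin k → Set Y) (n : ℕ) : ℝ :=
  ∑ a : Fin n → Fin k, Real.negMulLog (μ (⋂ i : Fin n, T^[(i : ℕ)] ⁻¹' P (a i))).toReal

/-- The Kolmogorov–Sinai entropy of `μ`. -/
def ksEntropy [MeasurableSpace Y] (μ : Measure Y) (T : Y → Y) : EReal :=
  ⨆ (k : ℕ) (P : Fin k → Set Y)
    (_ : (∀ i, MeasurableSet (P i)) ∧ Pairwise (Function.onFun Disjoint P) ∧
      ⋃ i, P i = Set.univ),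
    ((liminf (fun n : ℕ => partitionEnt μ T P n / n) atTop : ℝ) : EReal)

/-- `d` is the distance of a metric inducing the topology of `Y`. -/
def InducesTopology [ts : TopologicalSpace Y] (d : Y → Y → ℝ) : Prop :=
  ∃ m : MetricSpace Y, m.toPseudoMetricSpace.toUniformSpace.toTopologicalSpace = ts ∧
    ∀ a b : Y, @dist Y m.toPseudoMetricSpace.toDist a b = d a b

/-- `d` is the distance of a complete metric inducing the topology of `Y`. -/
def InducesTopologyComplete [ts : TopologicalSpace Y] (d : Y → Y → ℝ) : Prop :=
  ∃ m : MetricSpace Y, m.toPseudoMetricSpace.toUniformSpace.toTopologicalSpace = ts ∧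
    (∀ a b : Y, @dist Y m.toPseudoMetricSpace.toDist a b = d a b) ∧
    @CompleteSpace Y m.toPseudoMetricSpace.toUniformSpace

/-- The upper local entropy of `μ` with respect to the distance `d`. -/
def upperLocalEnt [MeasurableSpace Y] (μ : Measure Y) (T : Y → Y) (d : Y → Y → ℝ) : EReal :=
  essSup (fun y : Y =>
    ⨆ r : {r : ℝ // 0 < r},
      limsup (fun n : ℕ =>
        ((-Real.log (μ (dynBall d T n y r.1)).toReal / n : ℝ) : EReal)) atTop) μ

/-- The lower local entropy of `μ` with respect to the distance `d`. -/
def lowerLocalEnt [MeasurableSpace Y] (μ : Measure Y) (T : Y → Y) (d : Y → Y → ℝ) : EReal :=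
  essInf (fun y : Y =>
    ⨆ r : {r : ℝ // 0 < r},
      liminf (fun n : ℕ =>
        ((-Real.log (μ (dynBall d T n y r.1)).toReal / n : ℝ) : EReal)) atTop) μ

/-- The ergodic invariant probability measures of `(Y,T)`. -/
def ErgProb [MeasurableSpace Y] (T : Y → Y) :=
  {μ : Measure Y // IsProbabilityMeasure μ ∧ Ergodic T μ}

/-- The topological entropy, defined as the supremum of the Kolmogorov–Sinai entropies of the
ergodic invariant probability measures. -/
def topEnt [MeasurableSpace Y] (T : Y → Y) : EReal :=
  ⨆ μ : ErgProb T, ksEntropy μ.1 T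

/-- The upper local entropy of the system: `sup_μ inf_d` of the upper local entropies. -/
def upperLocalEntSys [TopologicalSpace Y] [MeasurableSpace Y] (T : Y → Y) : EReal :=
  ⨆ μ : ErgProb T, ⨅ d : {d : Y → Y → ℝ // InducesTopologyComplete d},
    upperLocalEnt μ.1 T d.1

/-- The lower local entropy of the system: `sup_μ inf_d` of the lower local entropies. -/
def lowerLocalEntSys [TopologicalSpace Y] [MeasurableSpace Y] (T : Y → Y) : EReal :=
  ⨆ μ : ErgProb T, ⨅ d : {d : Y → Y → ℝ // InducesTopologyComplete d},
    lowerLocalEnt μ.1 T d.1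

/-- The invariant topological entropy: in the Bowen formula the supremum is restricted to the
compact `T`-invariant subsets. -/
def invTopEnt [TopologicalSpace Y] (T : Y → Y) : EReal :=
  ⨅ d : {d : Y → Y → ℝ // InducesTopology d},
    ⨆ K : {K : Set Y // IsCompact K ∧ T '' K = K}, covEntropy d.1 T K.1

end Dynamics

end Paper

namespace Paper

/-- The action of an isometry `g` on continuous maps `ℝ → X` by postcomposition. -/
def smulCM {X : Type*} [MetricSpace X] (G : Type*) [Group G] [MulAction G X]
    [IsIsometricSMul G X] (g : G) (γ : C(ℝ, X)) : C(ℝ, X) :=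
  ⟨fun t => g • γ t, ((isometry_smul X g).continuous).comp γ.continuous⟩

end Paper

namespace Paper

variable {X : Type*} [MetricSpace X] {G : Type*} [Group G] [MulAction G X]

theorem exists_pos_eq_one_of_dist_smul_lt (hdisc : DiscreteAction G X)
    (hfree : FreeAction G X) (x : X) :
    ∃ ε > 0, ∀ g : G, dist x (g • x) < ε → g = 1 := by
  set D := {g : G | dist x (g • x) ≤ 1} \ {1}
  have hD : D.Finite := (hdisc x 1).sdiff
  have hpos : ∀ g ∈ D, 0 < dist x (g • x) := fun g hg =>
    dist_pos.mpr fun h => hg.2 (hfree g x h.symm)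
  have hsmall : ∀ᶠ ε in 𝓝 (0 : ℝ), ε < 1 ∧ ∀ g ∈ D, ε < dist x (g • x) :=
    (eventually_lt_nhds one_pos).and
      ((eventually_all_finite hD).2 fun g hg => eventually_lt_nhds (hpos g hg))
  obtain ⟨ε, ⟨hε1, hεD⟩, hε⟩ :=
    ((hsmall.filter_mono nhdsWithin_le_nhds).and self_mem_nhdsWithin).exists (f := 𝓝[>] 0)
  refine ⟨ε, hε, fun g hg => by_contra fun hg1 => ?_⟩
  exact (hεD g ⟨(hg.trans hε1).le, hg1⟩).not_gt hg

theorem exists_pos_eq_one_of_smul_mem_ball [IsIsometricSMul G X] (hdisc : DiscreteAction G X)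
    (hfree : FreeAction G X) (x : X) :
    ∃ r > 0, ∀ g : G, ∀ y ∈ ball x r, g • y ∈ ball x r → g = 1 := by
  obtain ⟨ε, hε, hsmall⟩ := exists_pos_eq_one_of_dist_smul_lt hdisc hfree x
  refine ⟨ε / 2, half_pos hε, fun g y hy hgy => hsmall g ?_⟩
  rw [mem_ball] at hy hgy
  calc dist x (g • x) ≤ dist x (g • y) + dist (g • y) (g • x) := dist_triangle _ _ _
    _ = dist (g • y) x + dist y x := by rw [dist_comm, dist_smul]
    _ < ε := by linarith

end Paper

open Paper in
theorem statement_10_general {X : Type*} [MetricSpace X]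
    (G : Type*) [Group G] [MulAction G X] [IsIsometricSMul G X]
    (hdisc : DiscreteAction G X) (hfree : FreeAction G X) :
    ∀ γ ∈ LocGeodSet X, ∃ U : Set C(ℝ, X), IsOpen U ∧ γ ∈ U ∧
      ∀ g : G, (∃ η ∈ U ∩ LocGeodSet X, smulCM G g η ∈ U ∩ LocGeodSet X) → g = 1 := by
  intro γ _
  obtain ⟨r, hr, hball⟩ := exists_pos_eq_one_of_smul_mem_ball hdisc hfree (γ 0)
  refine ⟨(fun η : C(ℝ, X) => η 0) ⁻¹' ball (γ 0) r,
    isOpen_ball.preimage (continuous_eval_const 0), mem_ball_self hr, ?_⟩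
  rintro g ⟨η, ⟨hη, -⟩, hgη, -⟩
  exact hball g (η 0) hη hgη

open Paper in
/-- Let `Γ = G` be a group of isometries of a proper metric space `X` acting
discretely and freely. Then the induced action of `Γ` on `Loc-Geod(X)` is properly
discontinuous: every local geodesic has an open neighbourhood `U` such that the only `g ∈ Γ`
with `gU ∩ U ≠ ∅` (within `Loc-Geod(X)`) is the identity. -/
theorem statement_10 {X : Type*} [MetricSpace X] [ProperSpace X]
    (G : Type*) [Group G] [MulAction G X] [IsIsometricSMul G X]
    (hdisc : DiscreteAction G X) (hfree : FreeAction G X) :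
    ∀ γ ∈ LocGeodSet X, ∃ U : Set C(ℝ, X), IsOpen U ∧ γ ∈ U ∧
      ∀ g : G, (∃ η ∈ U ∩ LocGeodSet X, smulCM G g η ∈ U ∩ LocGeodSet X) → g = 1 :=
  statement_10_general G hdisc hfree
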